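/- arXiv:1908.11690 — 3 statements merged into one kernel-verified Lean document; each statement's English description precedes it below -/
import Mathlib

section
/- Let d ∈ {3, 11, 19, 43, 67, 163}, let O_K be the ring of integers of K = Q(√−d), and let p be an odd prime. Suppose a, b, c ∈ O_K are nonzero, pairwise coprime (every pair generates the unit ideal), satisfy a^p + b^p + c^p = 0, and that 2 divides the product abc. Then b^{2p} − a^p c^p does not lie in the ideal 2O_K. -/
open NumberField

private lemma coprime_add_of_dvd {R : Type*} [CommRing R] {x y z : R}
    (h : IsCoprime x y) (hz : x ∣ z) : IsCoprime x (y + z) := by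
  obtain ⟨k, rfl⟩ := hz
  exact h.add_mul_left_right k

/-- For `d ∈ {3, 11, 19, 43, 67, 163}`, `K = ℚ(√−d)` and an odd prime `p`,
if `a, b, c ∈ 𝓞_K` are nonzero, pairwise coprime, satisfy `aᵖ + bᵖ + cᵖ = 0` and `2 ∣ abc`,
then `b^{2p} − aᵖcᵖ ∉ 2𝓞_K`. -/
theorem freycurve_c4_not_in_two
    (d : ℕ) (hd : d = 3 ∨ d = 11 ∨ d = 19 ∨ d = 43 ∨ d = 67 ∨ d = 163)
    (K : Type*) [Field K] [NumberField K] (hdeg : Module.finrank ℚ K = 2)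
    (sqd : K) (hsqd : sqd ^ 2 = -(d : K))
    (p : ℕ) (hp : p.Prime) (hodd : Odd p)
    (a b c : 𝓞 K) (ha : a ≠ 0) (hb : b ≠ 0) (hc : c ≠ 0)
    (hab : IsCoprime a b) (hac : IsCoprime a c) (hbc : IsCoprime b c)
    (habc : a ^ p + b ^ p + c ^ p = 0)
    (h2 : (2 : 𝓞 K) ∣ a * b * c) :
    b ^ (2 * p) - a ^ p * c ^ p ∉ Ideal.span {(2 : 𝓞 K)} := by
  intro hmem
  rw [Ideal.mem_span_singleton] at hmem
  -- `a`, `b`, `c` are all coprime to `b^(2p) - a^p c^p`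
  have hdvd_a : a ∣ -(a ^ p * c ^ p) :=
    dvd_neg.mpr ((dvd_pow_self a hp.ne_zero).mul_right _)
  have hdvd_c : c ∣ -(a ^ p * c ^ p) :=
    dvd_neg.mpr ((dvd_pow_self c hp.ne_zero).mul_left _)
  have hA : IsCoprime a (b ^ (2 * p) - a ^ p * c ^ p) := by
    rw [sub_eq_add_neg]
    exact coprime_add_of_dvd hab.pow_right hdvd_a
  have hC : IsCoprime c (b ^ (2 * p) - a ^ p * c ^ p) := by
    rw [sub_eq_add_neg]
    exact coprime_add_of_dvd hbc.symm.pow_right hdvd_c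
  have hB : IsCoprime b (b ^ (2 * p) - a ^ p * c ^ p) := by
    have h1 : IsCoprime b (-(a ^ p * c ^ p)) := by
      have := ((hab.symm.mul_right hbc).pow_right (n := p)).neg_right
      rwa [mul_pow] at this
    have := coprime_add_of_dvd h1 (dvd_pow_self b (Nat.mul_ne_zero two_ne_zero hp.ne_zero))
    rwa [neg_add_eq_sub] at this
  have hfull : IsCoprime (a * b * c) (b ^ (2 * p) - a ^ p * c ^ p) :=
    (hA.mul_left hB).mul_left hC
  have hunit : IsUnit (2 : 𝓞 K) := hfull.isUnit_of_dvd' h2 hmem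
  -- but 2 is not a unit in the ring of integers: its norm is 4
  have h4 : IsUnit (Algebra.norm ℤ (2 : 𝓞 K)) := hunit.map (Algebra.norm ℤ)
  have : (2 : 𝓞 K) = algebraMap ℤ (𝓞 K) 2 := by norm_num
  have hcard : Fintype.card (Module.Free.ChooseBasisIndex ℤ (𝓞 K)) = 2 := by
    rw [← Module.finrank_eq_card_chooseBasisIndex, RingOfIntegers.rank, hdeg]
  rw [this, Algebra.norm_algebraMap_of_basis (Module.Free.chooseBasis ℤ (𝓞 K)), hcard,
    Int.isUnit_iff] at h4
  omega
end

section
/- Let d ∈ {3, 11, 19, 43, 67, 163}, let O_K be the ring of integers of K = Q(√−d), let q = 2O_K, and let p ≥ 5 be a prime. Suppose a, b, c ∈ O_K are nonzero, pairwise coprime, satisfy a^p + b^p + c^p = 0, and that 2 divides abc. Let E = E_{a,b,c} be the Frey curve Y² = X(X − a^p)(X + b^p) and let j(E) ∈ K be its j-invariant. Writing n = v_q(abc) ≥ 1 for the q-adic valuation of abc, the q-adic valuation of j(E) equals 8 − 2pn; in particular v_q(j(E)) is negative and is not divisible by p. -/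
/-!
The ideal `q = (2)` is principal, so `v_q(x) = k` as soon as `2ᵏ ∣ x` and `2ᵏ⁺¹ ∤ x`. The
numerator `b^{2p} − aᵖcᵖ` is a `q`-adic unit: `b^{2p}` and `aᵖcᵖ` are coprime and `2` divides
their product, so it divides exactly one of them and hence not their difference. Therefore
`v_q(j) = 8·v_q(2) + 3·0 − 2p·v_q(abc) = 8 − 2pn`.
-/

open NumberField IsDedekindDomain WithZero

theorem Prime.not_dvd_sub_of_dvd_mul {R : Type*} [CommRing R] {π x y : R} (hπ : Prime π)
    (hxy : IsCoprime x y) (h : π ∣ x * y) : ¬ π ∣ x - y := by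
  intro hsub
  have hboth : π ∣ x ∧ π ∣ y := by
    rcases hπ.dvd_or_dvd h with hx | hy
    · exact ⟨hx, by simpa using dvd_sub hx hsub⟩
    · exact ⟨by simpa using dvd_add hsub hy, hy⟩
  exact hπ.not_isUnit (hxy.isUnit_of_dvd' hboth.1 hboth.2)

theorem Prime.not_dvd_pow_sub_mul_pow_of_dvd_mul_mul {R : Type*} [CommRing R] {π a b c : R}
    (hπ : Prime π) (hab : IsCoprime a b) (hbc : IsCoprime b c) (h : π ∣ a * b * c)
    {p : ℕ} (hp : p ≠ 0) : ¬ π ∣ b ^ (2 * p) - a ^ p * c ^ p := by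
  refine hπ.not_dvd_sub_of_dvd_mul ?_ ?_
  · rw [← mul_pow]
    exact (hab.symm.mul_right hbc).pow
  · have hprod : b ^ (2 * p) * (a ^ p * c ^ p) = b ^ p * (a * b * c) ^ p := by ring
    rw [hprod]
    exact (h.trans (dvd_pow_self _ hp)).mul_left _

namespace IsDedekindDomain.HeightOneSpectrum

variable {R : Type*} [CommRing R] [IsDedekindDomain R] (v : HeightOneSpectrum R)

theorem intValuation_eq_exp_of_pow_dvd_of_not_pow_succ_dvd {π x : R}
    (hv : v.asIdeal = Ideal.span {π}) {m : ℕ} (hm : π ^ m ∣ x) (hm' : ¬ π ^ (m + 1) ∣ x) :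
    v.intValuation x = exp (-(m : ℤ)) := by
  have hdvd (k : ℕ) : v.asIdeal ^ k ∣ Ideal.span {x} ↔ π ^ k ∣ x := by
    rw [hv, Ideal.span_singleton_pow, Ideal.dvd_span_singleton, Ideal.mem_span_singleton]
  have hmult : emultiplicity v.asIdeal (Ideal.span {x}) = m :=
    emultiplicity_eq_of_dvd_of_not_dvd ((hdvd m).2 hm) (mt (hdvd _).1 hm')
  exact le_antisymm (v.intValuation_le_exp_iff_le_emultiplicity.2 hmult.ge)
    (v.exp_le_intValuation_iff_emultiplicity_le.2 hmult.le)

end IsDedekindDomain.HeightOneSpectrum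

theorem Nat.Prime.not_intCast_dvd_eight_sub_mul {p : ℕ} (hp : p.Prime) (hp2 : p ≠ 2) (k : ℤ) :
    ¬ (p : ℤ) ∣ 8 - p * k := by
  rw [dvd_sub_left (dvd_mul_right _ _)]
  intro hdvd
  have h8 : p ∣ 2 ^ 3 := by exact_mod_cast hdvd
  exact hp2 ((Nat.prime_dvd_prime_iff_eq hp Nat.prime_two).1 (hp.dvd_of_dvd_pow h8))

theorem valuation_of_j_invariant_of_frey_curve_general
    (K : Type*) [Field K] [NumberField K]
    (p : ℕ) (hp : p.Prime) (hp5 : 5 ≤ p)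
    (a b c : 𝓞 K)
    (hab : IsCoprime a b) (hbc : IsCoprime b c)
    (h2 : (2 : 𝓞 K) ∣ a * b * c)
    (hq : (Ideal.span {(2 : 𝓞 K)}).IsPrime)
    (hq0 : Ideal.span {(2 : 𝓞 K)} ≠ ⊥)
    (n : ℕ) (hn : (2 : 𝓞 K) ^ n ∣ a * b * c) (hn' : ¬ (2 : 𝓞 K) ^ (n + 1) ∣ a * b * c) :
    let v : HeightOneSpectrum (𝓞 K) := ⟨Ideal.span {(2 : 𝓞 K)}, hq, hq0⟩
    let jE : K := 2 ^ 8 * (algebraMap (𝓞 K) K (b ^ (2 * p) - a ^ p * c ^ p)) ^ 3 /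
      (algebraMap (𝓞 K) K (a * b * c)) ^ (2 * p)
    1 ≤ n ∧
      v.valuation K jE = (↑(Multiplicative.ofAdd (2 * (p : ℤ) * (n : ℤ) - 8)) : WithZero (Multiplicative ℤ)) ∧
      ((8 : ℤ) - 2 * (p : ℤ) * (n : ℤ)) < 0 ∧ ¬ ((p : ℤ) ∣ (8 : ℤ) - 2 * (p : ℤ) * (n : ℤ)) := by
  intro v jE
  have hn1 : 1 ≤ n := Nat.one_le_iff_ne_zero.2 fun hn0 ↦ hn' (by simpa [hn0] using h2)
  have hprime : Prime (2 : 𝓞 K) := (Ideal.span_singleton_prime two_ne_zero).1 hq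
  have htwo : v.intValuation 2 = exp (-1 : ℤ) := v.intValuation_singleton two_ne_zero rfl
  have hnum : v.intValuation (b ^ (2 * p) - a ^ p * c ^ p) = 1 := by
    rw [HeightOneSpectrum.intValuation_eq_one_iff]
    exact mt Ideal.mem_span_singleton.1 (hprime.not_dvd_pow_sub_mul_pow_of_dvd_mul_mul hab hbc h2
      hp.ne_zero)
  have hden : v.intValuation (a * b * c) = exp (-(n : ℤ)) :=
    v.intValuation_eq_exp_of_pow_dvd_of_not_pow_succ_dvd rfl hn hn'
  refine ⟨hn1, ?_, by nlinarith, ?_⟩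
  · show v.valuation K (2 ^ 8 * _ / _) = _
    rw [← map_ofNat (algebraMap (𝓞 K) K) 2, map_div₀, map_mul, map_pow, map_pow, map_pow,
      v.valuation_of_algebraMap, v.valuation_of_algebraMap, v.valuation_of_algebraMap, htwo, hnum,
      hden, ← exp_eq_coe_ofAdd]
    simp only [one_pow, mul_one, ← exp_nsmul, ← exp_sub, exp_inj, nsmul_eq_mul]
    push_cast
    ring
  · rw [mul_comm 2, mul_assoc]
    exact hp.not_intCast_dvd_eight_sub_mul (by omega) _

/-- For `d ∈ {3, 11, 19, 43, 67, 163}`, `K = ℚ(√−d)`, `q = 2𝓞_K` and a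
prime `p ≥ 5`, let `a, b, c ∈ 𝓞_K` be nonzero, pairwise coprime, with `aᵖ + bᵖ + cᵖ = 0` and
`2 ∣ abc`.  Writing `n = v_q(abc)`, the `q`-adic valuation of the `j`-invariant
`j(E) = 2⁸·(b^{2p} − aᵖcᵖ)³/(abc)^{2p}` of the Frey curve equals `8 − 2pn` (multiplicatively,
the valuation of `j(E)` is `ofAdd(2pn − 8)`); in particular `n ≥ 1`, `8 − 2pn < 0` and
`p ∤ 8 − 2pn`. -/
theorem valuation_of_j_invariant_of_frey_curve
    (d : ℕ) (hd : d = 3 ∨ d = 11 ∨ d = 19 ∨ d = 43 ∨ d = 67 ∨ d = 163)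
    (K : Type*) [Field K] [NumberField K] (hdeg : Module.finrank ℚ K = 2)
    (sqd : K) (hsqd : sqd ^ 2 = -(d : K))
    (p : ℕ) (hp : p.Prime) (hp5 : 5 ≤ p)
    (a b c : 𝓞 K) (ha : a ≠ 0) (hb : b ≠ 0) (hc : c ≠ 0)
    (hab : IsCoprime a b) (hac : IsCoprime a c) (hbc : IsCoprime b c)
    (habc : a ^ p + b ^ p + c ^ p = 0)
    (h2 : (2 : 𝓞 K) ∣ a * b * c)
    (hq : (Ideal.span {(2 : 𝓞 K)}).IsPrime)
    (hq0 : Ideal.span {(2 : 𝓞 K)} ≠ ⊥)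
    (n : ℕ) (hn : (2 : 𝓞 K) ^ n ∣ a * b * c) (hn' : ¬ (2 : 𝓞 K) ^ (n + 1) ∣ a * b * c) :
    let v : HeightOneSpectrum (𝓞 K) := ⟨Ideal.span {(2 : 𝓞 K)}, hq, hq0⟩
    let jE : K := 2 ^ 8 * (algebraMap (𝓞 K) K (b ^ (2 * p) - a ^ p * c ^ p)) ^ 3 /
      (algebraMap (𝓞 K) K (a * b * c)) ^ (2 * p)
    1 ≤ n ∧
      v.valuation K jE = (↑(Multiplicative.ofAdd (2 * (p : ℤ) * (n : ℤ) - 8)) : WithZero (Multiplicative ℤ)) ∧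
      ((8 : ℤ) - 2 * (p : ℤ) * (n : ℤ)) < 0 ∧ ¬ ((p : ℤ) ∣ (8 : ℤ) - 2 * (p : ℤ) * (n : ℤ)) :=
  valuation_of_j_invariant_of_frey_curve_general K p hp hp5 a b c hab hbc h2 hq hq0 n hn hn'
end

section
/- Let O_K = Z[ω] be the ring of integers of K = Q(√−3), where ω = (−1 + √−3)/2 is a primitive third root of unity, and let p ≥ 5 be a prime. Then units a, b, c ∈ O_Kˣ satisfy a^p + b^p + c^p = 0 if and only if there exist a unit u ∈ O_Kˣ and a permutation (x, y, z) of the triple (1, ω, ω²) such that (a, b, c) = (ux, uy, uz). -/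
/-!
`K = ℚ(ω)` is the third cyclotomic field, of unit rank `0`, so its units are the six roots of
unity `±1, ±ω, ±ω²`. As `u ^ 6 = 1` for every unit and `p * p ≡ 1 [MOD 6]`, raising to the `p`-th
power is an involution of the unit group; since `ω ^ p` is `ω` or `ω²`, it maps unit multiples of
permutations of `(1, ω, ω²)` to unit multiples of permutations of `(1, ω, ω²)`. So it suffices to
solve `a + b + c = 0` in units: dividing by `a` gives `1 + x + y = 0`, and `y ^ 6 = 1` leaves only
`{x, y} = {ω, ω²}`.
-/

open NumberField IntermediateField Polynomial

section CubeRoots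

variable {R : Type*} [CommRing R] {ω : R}

def IsUnitMulPermCubeRoots (ω a b c : R) : Prop :=
  ∃ u : Rˣ, ∃ σ : Equiv.Perm (Fin 3), ∀ i, ![a, b, c] i = u * ![1, ω, ω ^ 2] (σ i)

theorem cube_eq_one_of_sq_add_add_one (hω : ω ^ 2 + ω + 1 = 0) : ω ^ 3 = 1 := by
  linear_combination (ω - 1) * hω

theorem cubeRoots_pow_of_mod_three_eq_one (hω3 : ω ^ 3 = 1) {n : ℕ} (hn : n % 3 = 1)
    (j : Fin 3) : ![1, ω, ω ^ 2] j ^ n = ![1, ω, ω ^ 2] j := by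
  have hωn : ω ^ n = ω := by rw [pow_eq_pow_mod n hω3, hn, pow_one]
  fin_cases j <;> simp [pow_right_comm _ 2 n, hωn]

theorem cubeRoots_pow_of_mod_three_eq_two (hω3 : ω ^ 3 = 1) {n : ℕ} (hn : n % 3 = 2)
    (j : Fin 3) : ![1, ω, ω ^ 2] j ^ n = ![1, ω, ω ^ 2] (Equiv.swap 1 2 j) := by
  have hωn : ω ^ n = ω ^ 2 := by rw [pow_eq_pow_mod n hω3, hn]
  fin_cases j
  · simp [Equiv.swap_apply_of_ne_of_ne]
  · simp [hωn]
  · simp only [Fin.reduceFinMk, Matrix.cons_val, Equiv.swap_apply_right, pow_right_comm _ 2 n, hωn]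
    linear_combination ω * hω3

theorem IsUnitMulPermCubeRoots.pow (hω3 : ω ^ 3 = 1) {a b c : R}
    (h : IsUnitMulPermCubeRoots ω a b c) {n : ℕ} (hn : ¬ 3 ∣ n) :
    IsUnitMulPermCubeRoots ω (a ^ n) (b ^ n) (c ^ n) := by
  obtain ⟨u, σ, h⟩ := h
  have hpow : ∀ i, ![a ^ n, b ^ n, c ^ n] i = ![a, b, c] i ^ n := by
    intro i; fin_cases i <;> rfl
  rcases (by omega : n % 3 = 1 ∨ n % 3 = 2) with hn | hn
  · refine ⟨u ^ n, σ, fun i => ?_⟩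
    rw [hpow, h, mul_pow, cubeRoots_pow_of_mod_three_eq_one hω3 hn, Units.val_pow_eq_pow_val]
  · refine ⟨u ^ n, σ.trans (Equiv.swap 1 2), fun i => ?_⟩
    rw [hpow, h, mul_pow, cubeRoots_pow_of_mod_three_eq_two hω3 hn, Units.val_pow_eq_pow_val]
    rfl

theorem IsUnitMulPermCubeRoots.add_add_eq_zero (hω : ω ^ 2 + ω + 1 = 0) {a b c : R}
    (h : IsUnitMulPermCubeRoots ω a b c) : a + b + c = 0 := by
  obtain ⟨u, σ, h⟩ := h
  calc a + b + c = ∑ i, ![a, b, c] i := by simp [Fin.sum_univ_three]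
    _ = u * ∑ i, ![1, ω, ω ^ 2] (σ i) := by simp only [h, Finset.mul_sum]
    _ = u * (ω ^ 2 + ω + 1) := by rw [Equiv.sum_comp σ]; simp [Fin.sum_univ_three]; ring
    _ = 0 := by rw [hω, mul_zero]

theorem pow_six_eq_one_of_mem (hω : ω ^ 2 + ω + 1 = 0) {x : R}
    (hx : x ∈ [1, -1, ω, -ω, ω ^ 2, -ω ^ 2]) : x ^ 6 = 1 := by
  have hω3 := cube_eq_one_of_sq_add_add_one hω
  simp only [List.mem_cons, List.not_mem_nil, or_false] at hx
  rcases hx with h | h | h | h | h | h <;> rw [h]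
  · exact one_pow 6
  · norm_num
  · linear_combination (ω ^ 3 + 1) * hω3
  · linear_combination (ω ^ 3 + 1) * hω3
  · linear_combination (ω ^ 9 + ω ^ 6 + ω ^ 3 + 1) * hω3
  · linear_combination (ω ^ 9 + ω ^ 6 + ω ^ 3 + 1) * hω3

theorem sub_one_pow_six_of_sq_add_add_one (hω : ω ^ 2 + ω + 1 = 0) : (ω - 1) ^ 6 = -27 := by
  have hsq : (ω - 1) ^ 2 = -3 * ω := by linear_combination hω
  calc (ω - 1) ^ 6 = ((ω - 1) ^ 2) ^ 3 := by ring
    _ = -27 * ω ^ 3 := by rw [hsq]; ring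
    _ = -27 := by rw [cube_eq_one_of_sq_add_add_one hω, mul_one]

theorem eq_and_eq_sq_or_of_one_add_add_eq_zero [CharZero R] (hω : ω ^ 2 + ω + 1 = 0) {x y : R}
    (hx : x ∈ [1, -1, ω, -ω, ω ^ 2, -ω ^ 2]) (hy : y ^ 6 = 1) (h : 1 + x + y = 0) :
    x = ω ∧ y = ω ^ 2 ∨ x = ω ^ 2 ∧ y = ω := by
  have hω2 : (ω ^ 2) ^ 2 + ω ^ 2 + 1 = 0 := by linear_combination (ω ^ 2 - ω + 1) * hω
  obtain rfl : y = -1 - x := by linear_combination h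
  simp only [List.mem_cons, List.not_mem_nil, or_false] at hx
  -- in the four excluded cases `y` is `-2`, `0`, `ω - 1` or `ω² - 1`, of sixth power `64`, `0`
  -- or `-27`
  rcases hx with rfl | rfl | rfl | rfl | rfl | rfl
  · norm_num at hy
  · norm_num at hy
  · exact Or.inl ⟨rfl, by linear_combination -hω⟩
  · rw [show -1 - -ω = ω - 1 by ring, sub_one_pow_six_of_sq_add_add_one hω] at hy
    norm_num at hy
  · exact Or.inr ⟨rfl, by linear_combination -hω⟩
  · rw [show -1 - -ω ^ 2 = ω ^ 2 - 1 by ring, sub_one_pow_six_of_sq_add_add_one hω2] at hy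
    norm_num at hy

theorem isUnitMulPermCubeRoots_of_add_add_eq_zero [CharZero R] (hω : ω ^ 2 + ω + 1 = 0)
    (hunits : ∀ u : Rˣ, (u : R) ∈ [1, -1, ω, -ω, ω ^ 2, -ω ^ 2]) {a b c : Rˣ}
    (h : (a : R) + b + c = 0) : IsUnitMulPermCubeRoots ω a b c := by
  obtain ⟨x, rfl⟩ : ∃ x : Rˣ, b = a * x := ⟨a⁻¹ * b, by group⟩
  obtain ⟨y, rfl⟩ : ∃ y : Rˣ, c = a * y := ⟨a⁻¹ * c, by group⟩
  have hsum : 1 + (x : R) + y = 0 :=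
    (Units.mul_right_eq_zero a).1 (by simpa only [Units.val_mul, mul_add, mul_one] using h)
  rcases eq_and_eq_sq_or_of_one_add_add_eq_zero hω (hunits x)
    (pow_six_eq_one_of_mem hω (hunits y)) hsum with ⟨hx, hy⟩ | ⟨hx, hy⟩
  · refine ⟨a, 1, fun i => ?_⟩
    fin_cases i <;> simp [hx, hy]
  · refine ⟨a, Equiv.swap 1 2, fun i => ?_⟩
    fin_cases i <;> simp [hx, hy, Equiv.swap_apply_of_ne_of_ne]

theorem Nat.mul_self_mod_six_of_coprime {p : ℕ} (hp : p.Coprime 6) : p * p % 6 = 1 := by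
  have h : (p % 6).Coprime 6 := by rw [Nat.Coprime, ← Nat.gcd_rec]; exact hp.symm
  rw [Nat.mul_mod]
  have : p % 6 < 6 := Nat.mod_lt _ (by norm_num)
  interval_cases p % 6 <;> revert h <;> decide

theorem add_pow_add_pow_eq_zero_iff_isUnitMulPermCubeRoots [CharZero R]
    (hω : ω ^ 2 + ω + 1 = 0) (hunits : ∀ u : Rˣ, (u : R) ∈ [1, -1, ω, -ω, ω ^ 2, -ω ^ 2])
    {p : ℕ} (hp : p.Coprime 6) (a b c : Rˣ) :
    (a : R) ^ p + (b : R) ^ p + (c : R) ^ p = 0 ↔ IsUnitMulPermCubeRoots ω a b c := by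
  have hω3 := cube_eq_one_of_sq_add_add_one hω
  have hp3 : ¬ 3 ∣ p := fun h => by
    have := Nat.Coprime.coprime_dvd_left h hp
    norm_num at this
  have hpp : ∀ u : Rˣ, ((u : R) ^ p) ^ p = u := fun u => by
    rw [← pow_mul, pow_eq_pow_mod _ (pow_six_eq_one_of_mem hω (hunits u)),
      Nat.mul_self_mod_six_of_coprime hp, pow_one]
  refine ⟨fun h => ?_, fun h => (h.pow hω3 hp3).add_add_eq_zero hω⟩
  have hsol := isUnitMulPermCubeRoots_of_add_add_eq_zero hω hunits (a := a ^ p) (b := b ^ p)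
    (c := c ^ p) (by simpa only [Units.val_pow_eq_pow_val] using h)
  simpa only [Units.val_pow_eq_pow_val, hpp] using hsol.pow hω3 hp3

end CubeRoots

theorem isPrimitiveRoot_three_of_sq_add_add_one {R : Type*} [CommRing R] [IsDomain R] [CharZero R]
    {ω : R} (hω : ω ^ 2 + ω + 1 = 0) : IsPrimitiveRoot ω 3 := by
  rw [← isRoot_cyclotomic_iff_charZero three_pos, cyclotomic_three]
  simpa using hω

theorem isCyclotomicExtension_three_of_finrank_eq_two {K : Type*} [Field K] [NumberField K]
    (hdeg : Module.finrank ℚ K = 2) {ζ : K} (hζ : IsPrimitiveRoot ζ 3) :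
    IsCyclotomicExtension {3} ℚ K := by
  have htop : ℚ⟮ζ⟯ = ⊤ := IntermediateField.eq_of_le_of_finrank_eq le_top <| by
    rw [finrank_top', hdeg, adjoin.finrank (IsIntegral.of_finite ℚ ζ),
      ← cyclotomic_eq_minpoly_rat hζ three_pos, natDegree_cyclotomic]
    rfl
  have := hζ.intermediateField_adjoin_isCyclotomicExtension ℚ
  exact IsCyclotomicExtension.equiv _ _ _ ((equivOfEq htop).trans topEquiv)

theorem NumberField.RingOfIntegers.coe_unit_mem_of_finrank_eq_two {K : Type*} [Field K]
    [NumberField K] (hdeg : Module.finrank ℚ K = 2) {ω : 𝓞 K} (hω : ω ^ 2 + ω + 1 = 0) (u : (𝓞 K)ˣ) :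
    (u : 𝓞 K) ∈ [1, -1, ω, -ω, ω ^ 2, -ω ^ 2] := by
  have hζ : IsPrimitiveRoot (ω : K) 3 :=
    isPrimitiveRoot_three_of_sq_add_add_one (by exact_mod_cast congrArg (algebraMap (𝓞 K) K) hω)
  have := isCyclotomicExtension_three_of_finrank_eq_two hdeg hζ
  have h := IsCyclotomicExtension.Rat.Three.Units.mem hζ u
  simp only [List.mem_cons, List.not_mem_nil, or_false] at h ⊢
  rcases h with h | h | h | h | h | h <;> simp [h]

theorem Nat.Prime.coprime_six {p : ℕ} (hp : p.Prime) (hp5 : 5 ≤ p) : p.Coprime 6 := by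
  rw [hp.coprime_iff_not_dvd]
  intro h
  rcases (hp.dvd_mul (m := 2) (n := 3)).1 h with h | h <;>
    have := Nat.le_of_dvd (by norm_num) h <;> omega

theorem unit_solutions_of_fermat_over_Q_sqrt_minus_three_general
    (K : Type*) [Field K] [NumberField K] (hdeg : Module.finrank ℚ K = 2)
    (ω : 𝓞 K)
    (hω' : ω ^ 2 + ω + 1 = 0)
    (p : ℕ) (hp : p.Prime) (hp5 : 5 ≤ p)
    (a b c : (𝓞 K)ˣ) :
    (a : 𝓞 K) ^ p + (b : 𝓞 K) ^ p + (c : 𝓞 K) ^ p = 0 ↔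
      ∃ u : (𝓞 K)ˣ, ∃ σ : Equiv.Perm (Fin 3),
        ∀ i : Fin 3,
          ![(a : 𝓞 K), (b : 𝓞 K), (c : 𝓞 K)] i = (u : 𝓞 K) * ![1, ω, ω ^ 2] (σ i) :=
  add_pow_add_pow_eq_zero_iff_isUnitMulPermCubeRoots hω'
    (RingOfIntegers.coe_unit_mem_of_finrank_eq_two hdeg hω') (hp.coprime_six hp5) a b c

/-- Let `K = ℚ(√−3)` with ring of integers `ℤ[ω]`, where
`ω = (−1+√−3)/2` is a primitive third root of unity, and let `p ≥ 5` be prime.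
Units `a, b, c` of `𝓞_K` satisfy `aᵖ + bᵖ + cᵖ = 0` if and only if `(a, b, c)` is a
unit multiple of a permutation of `(1, ω, ω²)`. -/
theorem unit_solutions_of_fermat_over_Q_sqrt_minus_three
    (K : Type*) [Field K] [NumberField K] (hdeg : Module.finrank ℚ K = 2)
    (sqd : K) (hsqd : sqd ^ 2 = -(3 : K))
    (ω : 𝓞 K) (hω : algebraMap (𝓞 K) K ω = (-1 + sqd) / 2)
    (hω' : ω ^ 2 + ω + 1 = 0)
    (p : ℕ) (hp : p.Prime) (hp5 : 5 ≤ p)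
    (a b c : (𝓞 K)ˣ) :
    (a : 𝓞 K) ^ p + (b : 𝓞 K) ^ p + (c : 𝓞 K) ^ p = 0 ↔
      ∃ u : (𝓞 K)ˣ, ∃ σ : Equiv.Perm (Fin 3),
        ∀ i : Fin 3,
          ![(a : 𝓞 K), (b : 𝓞 K), (c : 𝓞 K)] i = (u : 𝓞 K) * ![1, ω, ω ^ 2] (σ i) :=
  unit_solutions_of_fermat_over_Q_sqrt_minus_three_general K hdeg ω hω' p hp hp5 a b c
end
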